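/- Let (μ_n)_{n∈ℕ} be a sequence in 𝐌 and μ_∞ ∈ 𝐌. The following are equivalent: (i) W₁(μ_n, μ_∞) → 0; (ii) L_{μ_n} → L_{μ_∞} pointwise on [0,1] and m_{μ_n} → m_{μ_∞}; (iii) L_{μ_n} → L_{μ_∞} uniformly on [0,1] and m_{μ_n} → m_{μ_∞}. -/

import Mathlib

open MeasureTheory Filter Topology

noncomputable section

/-- The mean of a measure on `ℝ`. -/
def mMean (μ : Measure ℝ) : ℝ := ∫ x, x ∂μ

/-- `μ ∈ 𝐌`: a Borel probability measure on `ℝ₊` (modelled as a measure on `ℝ` giving no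
mass to negative numbers) with finite nonzero mean. -/
def MemM (μ : Measure ℝ) : Prop :=
  IsProbabilityMeasure μ ∧ μ {x | x < 0} = 0 ∧ Integrable id μ ∧ 0 < mMean μ

/-- The cumulative distribution function `F_μ(x) = μ([0,x])`. -/
def cdfR (μ : Measure ℝ) (x : ℝ) : ℝ := (μ (Set.Icc 0 x)).toReal

/-- The quantile function `Q_μ(p) = inf {x ∈ ℝ₊ : F_μ(x) ≥ p}`. -/
def quant (μ : Measure ℝ) (p : ℝ) : ℝ := sInf {x : ℝ | 0 ≤ x ∧ p ≤ cdfR μ x}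

/-- The Lorenz function `L_μ(p) = (∫_0^p Q_μ(t) dt) / m_μ`. -/
def lorenz (μ : Measure ℝ) (p : ℝ) : ℝ := (∫ t in (0:ℝ)..p, quant μ t) / mMean μ

/-- The pseudo-Lorenz function `Λ_μ(p) = (∫_{[0,Q_μ(p)]} u dμ(u)) / m_μ` for `p ∈ [0,1)`,
with `Λ_μ(1) = 1`. -/
def pseudoLorenz (μ : Measure ℝ) (p : ℝ) : ℝ :=
  if p = 1 then 1 else (∫ u in Set.Icc (0:ℝ) (quant μ p), u ∂μ) / mMean μ

/-- The Gini coefficient `G(μ) = (∫∫ |x-y| d(μ⊗μ)) / (2 m_μ)`. -/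
def gini (μ : Measure ℝ) : ℝ := (∫ z : ℝ × ℝ, |z.1 - z.2| ∂(μ.prod μ)) / (2 * mMean μ)

/-- The Hoover coefficient `H(μ) = (∫ |x - m_μ| dμ) / (2 m_μ)`. -/
def hoover (μ : Measure ℝ) : ℝ := (∫ x, |x - mMean μ| ∂μ) / (2 * mMean μ)

/-- The Wasserstein-1 distance `W₁(μ,ν) = ∫_0^1 |Q_μ - Q_ν|`. -/
def W1 (μ ν : Measure ℝ) : ℝ := ∫ t in (0:ℝ)..1, |quant μ t - quant ν t|

/-- Weak convergence of a sequence of measures: convergence of integrals of all bounded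
continuous functions. -/
def WeakCv (μs : ℕ → Measure ℝ) (ν : Measure ℝ) : Prop :=
  ∀ f : ℝ → ℝ, Continuous f → (∃ C : ℝ, ∀ x, |f x| ≤ C) →
    Tendsto (fun n => ∫ x, f x ∂(μs n)) atTop (𝓝 (∫ x, f x ∂ν))

/-- Uniform integrability of a family of measures on `ℝ₊`:
`sup_i ∫_{(α,∞)} x dμ_i(x) → 0` as `α → +∞`. -/
def UnifInt {ι : Type*} (μs : ι → Measure ℝ) : Prop :=
  ∀ ε > (0:ℝ), ∃ A : ℝ, ∀ α ≥ A, ∀ i, (∫ x in Set.Ioi α, x ∂(μs i)) ≤ ε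

end

/-!
The quantile function `Q_μ` pushes Lebesgue measure on `(0,1)` forward to `μ`, so
`m_μ = ∫₀¹ Q_μ` and `m_μ L_μ(p) = ∫₀ᵖ Q_μ`. Since `|∫₀ᵖ Q_μ - ∫₀ᵖ Q_ν| ≤ W₁(μ,ν)` for every
`p ∈ [0,1]`, convergence in `W₁` gives convergence of the means and uniform convergence of the
Lorenz functions. Conversely, pointwise convergence of the Lorenz functions and of the means gives
convergence of `∫ₚ^q Q_{μ_n}` for all `p, q`; as quantile functions are monotone, this forces
`Q_{μ_n} → Q_ν` at every continuity point of `Q_ν`, hence almost everywhere, and Scheffé's lemma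
(`|f - g| = f + g - 2 min f g`) upgrades this to `W₁(μ_n, ν) → 0`.
-/

open Set ProbabilityTheory

section General

variable {ι : Type*} {l : Filter ι}

lemma tendstoUniformlyOn_of_forall_dist_le {α β : Type*} [PseudoMetricSpace β]
    {F : ι → α → β} {f : α → β} {s : Set α} {b : ι → ℝ} (hb : Tendsto b l (𝓝 0))
    (hF : ∀ᶠ i in l, ∀ x ∈ s, dist (f x) (F i x) ≤ b i) : TendstoUniformlyOn F f l s :=
  Metric.tendstoUniformlyOn_iff.2 fun _ hε =>
    (hF.and (hb.eventually (gt_mem_nhds hε))).mono fun _ hi x hx => (hi.1 x hx).trans_lt hi.2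

lemma mul_le_intervalIntegral_of_monotoneOn {f : ℝ → ℝ} {t u : ℝ} (htu : t ≤ u)
    (hf : MonotoneOn f (Icc t u)) : (u - t) * f t ≤ ∫ x in t..u, f x := by
  have h := intervalIntegral.integral_mono_on (μ := volume) htu intervalIntegrable_const
    (MonotoneOn.intervalIntegrable (by rwa [uIcc_of_le htu]))
    (fun x hx => hf (left_mem_Icc.2 htu) hx hx.1)
  rwa [intervalIntegral.integral_const, smul_eq_mul] at h

lemma intervalIntegral_le_mul_of_monotoneOn {f : ℝ → ℝ} {t u : ℝ} (htu : t ≤ u)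
    (hf : MonotoneOn f (Icc t u)) : ∫ x in t..u, f x ≤ (u - t) * f u := by
  have h := intervalIntegral.integral_mono_on (μ := volume) htu
    (MonotoneOn.intervalIntegrable (by rwa [uIcc_of_le htu])) intervalIntegrable_const
    (fun x hx => hf hx (right_mem_Icc.2 htu) hx.2)
  rwa [intervalIntegral.integral_const, smul_eq_mul] at h

lemma volume_Ioo_inter_Iic {c : ℝ} (h1 : c ≤ 1) :
    volume (Ioo 0 1 ∩ Iic c) = ENNReal.ofReal c := by
  refine le_antisymm ?_ ?_
  · calc volume (Ioo 0 1 ∩ Iic c) ≤ volume (Icc 0 c) :=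
          measure_mono fun t ht => ⟨ht.1.1.le, ht.2⟩
      _ = ENNReal.ofReal c := by rw [Real.volume_Icc, sub_zero]
  · calc ENNReal.ofReal c = volume (Ioo 0 c) := by rw [Real.volume_Ioo, sub_zero]
      _ ≤ volume (Ioo 0 1 ∩ Iic c) :=
          measure_mono fun t ht => ⟨⟨ht.1, ht.2.trans_le h1⟩, ht.2.le⟩

theorem tendsto_integral_abs_sub_of_tendsto_integral {α : Type*} [MeasurableSpace α]
    {μ : Measure α} [l.IsCountablyGenerated] {f : ι → α → ℝ} {g : α → ℝ}
    (hf : ∀ i, Integrable (f i) μ) (hg : Integrable g μ) (hf0 : ∀ i, ∀ᵐ x ∂μ, 0 ≤ f i x)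
    (hlim : ∀ᵐ x ∂μ, Tendsto (fun i => f i x) l (𝓝 (g x)))
    (hint : Tendsto (fun i => ∫ x, f i x ∂μ) l (𝓝 (∫ x, g x ∂μ))) :
    Tendsto (fun i => ∫ x, |f i x - g x| ∂μ) l (𝓝 0) := by
  have hmin : Tendsto (fun i => ∫ x, min (f i x) (g x) ∂μ) l (𝓝 (∫ x, g x ∂μ)) := by
    refine tendsto_integral_filter_of_dominated_convergence (fun x => |g x|)
      (Eventually.of_forall fun i => ((hf i).inf hg).aestronglyMeasurable)
      (Eventually.of_forall fun i => ?_) hg.abs ?_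
    · filter_upwards [hf0 i] with x hx
      rw [Real.norm_eq_abs, abs_le]
      exact ⟨le_min ((neg_nonpos.2 (abs_nonneg _)).trans hx) (neg_abs_le _),
        (min_le_right _ _).trans (le_abs_self _)⟩
    · filter_upwards [hlim] with x hx
      simpa using hx.min (tendsto_const_nhds (x := g x))
  have habs : ∀ i, ∫ x, |f i x - g x| ∂μ =
      ∫ x, f i x ∂μ + ∫ x, g x ∂μ - 2 * ∫ x, min (f i x) (g x) ∂μ := fun i => by
    calc ∫ x, |f i x - g x| ∂μ = ∫ x, (f i x + g x - 2 * min (f i x) (g x)) ∂μ :=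
          integral_congr_ae (ae_of_all _ fun x => by
            linarith [max_sub_min_eq_abs' (f i x) (g x), min_add_max (f i x) (g x)])
      _ = _ := by
          rw [integral_sub (f := fun x => f i x + g x) (g := fun x => 2 * min (f i x) (g x))
              ((hf i).add hg) (((hf i).inf hg).const_mul 2),
            integral_add (hf i) hg, integral_const_mul]
  have h := (hint.add_const (∫ x, g x ∂μ)).sub (hmin.const_mul 2)
  rw [show ∫ x, g x ∂μ + ∫ x, g x ∂μ - 2 * ∫ x, g x ∂μ = 0 by ring] at h
  simpa only [habs] using h

variable {f : ι → ℝ → ℝ} {g : ℝ → ℝ}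

lemma eventually_lt_of_tendsto_intervalIntegral {t u c : ℝ} (htu : t < u)
    (hf : ∀ i, MonotoneOn (f i) (Icc t u)) (hg : MonotoneOn g (Icc t u))
    (hlim : Tendsto (fun i => ∫ x in t..u, f i x) l (𝓝 (∫ x in t..u, g x))) (hgu : g u < c) :
    ∀ᶠ i in l, f i t < c := by
  have hpos : 0 < u - t := sub_pos.2 htu
  have hint : ∫ x in t..u, g x < (u - t) * c :=
    (intervalIntegral_le_mul_of_monotoneOn htu.le hg).trans_lt (by gcongr)
  filter_upwards [hlim.eventually (gt_mem_nhds hint)] with i hi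
  exact lt_of_mul_lt_mul_left ((mul_le_intervalIntegral_of_monotoneOn htu.le (hf i)).trans_lt hi)
    hpos.le

lemma eventually_gt_of_tendsto_intervalIntegral {s t c : ℝ} (hst : s < t)
    (hf : ∀ i, MonotoneOn (f i) (Icc s t)) (hg : MonotoneOn g (Icc s t))
    (hlim : Tendsto (fun i => ∫ x in s..t, f i x) l (𝓝 (∫ x in s..t, g x))) (hgs : c < g s) :
    ∀ᶠ i in l, c < f i t := by
  have hpos : 0 < t - s := sub_pos.2 hst
  have hint : (t - s) * c < ∫ x in s..t, g x :=
    (by gcongr : (t - s) * c < (t - s) * g s).trans_le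
      (mul_le_intervalIntegral_of_monotoneOn hst.le hg)
  filter_upwards [hlim.eventually (lt_mem_nhds hint)] with i hi
  exact lt_of_mul_lt_mul_left (hi.trans_le (intervalIntegral_le_mul_of_monotoneOn hst.le (hf i)))
    hpos.le

theorem tendsto_of_tendsto_intervalIntegral_of_monotoneOn {a b t : ℝ}
    (hf : ∀ i, MonotoneOn (f i) (Ioo a b)) (hg : MonotoneOn g (Ioo a b))
    (hlim : ∀ p ∈ Ioo a b, ∀ q ∈ Ioo a b,
      Tendsto (fun i => ∫ x in p..q, f i x) l (𝓝 (∫ x in p..q, g x)))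
    (ht : t ∈ Ioo a b) (hgt : ContinuousAt g t) : Tendsto (fun i => f i t) l (𝓝 (g t)) := by
  have hsub : ∀ {p q}, p ∈ Ioo a b → q ∈ Ioo a b → Icc p q ⊆ Ioo a b := fun hp hq =>
    Icc_subset_Ioo hp.1 hq.2
  refine tendsto_order.2 ⟨fun c hc => ?_, fun c hc => ?_⟩
  · obtain ⟨s, ⟨hcs, hsab⟩, hst⟩ := (((hgt.eventually (lt_mem_nhds hc)).and
      (Ioo_mem_nhds ht.1 ht.2)).filter_mono nhdsWithin_le_nhds |>.and
      (self_mem_nhdsWithin : Iio t ∈ 𝓝[<] t)).exists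
    exact eventually_gt_of_tendsto_intervalIntegral hst (fun i => (hf i).mono (hsub hsab ht))
      (hg.mono (hsub hsab ht)) (hlim s hsab t ht) hcs
  · obtain ⟨u, ⟨hcu, huab⟩, htu⟩ := (((hgt.eventually (gt_mem_nhds hc)).and
      (Ioo_mem_nhds ht.1 ht.2)).filter_mono nhdsWithin_le_nhds |>.and
      (self_mem_nhdsWithin : Ioi t ∈ 𝓝[>] t)).exists
    exact eventually_lt_of_tendsto_intervalIntegral htu (fun i => (hf i).mono (hsub ht huab))
      (hg.mono (hsub ht huab)) (hlim t ht u huab) hcu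

end General

section Quantile

variable {μ ν : Measure ℝ}

lemma cdfR_eq_cdf (hμ : MemM μ) : cdfR μ = cdf μ := by
  have := hμ.1
  funext x
  have hIcc : Icc 0 x = Iic x \ {y | y < 0} := by
    ext y
    simp [and_comm]
  rw [cdfR, cdf_eq_real, measureReal_def, hIcc, measure_sdiff_null hμ.2.1]

lemma quant_nonneg (p : ℝ) : 0 ≤ quant μ p :=
  Real.sInf_nonneg fun _ hx => hx.1

lemma le_cdf_quant (hμ : MemM μ) {p : ℝ} (hp : p < 1) : p ≤ cdf μ (quant μ p) := by
  rw [quant, cdfR_eq_cdf hμ]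
  obtain ⟨x, hpx, hx⟩ :=
    (((tendsto_cdf_atTop μ).eventually (lt_mem_nhds hp)).and (eventually_ge_atTop 0)).exists
  have hne : {x : ℝ | 0 ≤ x ∧ p ≤ cdf μ x}.Nonempty := ⟨x, hx, hpx.le⟩
  have habove : ∀ y ∈ Ioi (sInf {x : ℝ | 0 ≤ x ∧ p ≤ cdf μ x}), p ≤ cdf μ y := fun y hy => by
    obtain ⟨z, hz, hzy⟩ := exists_lt_of_csInf_lt hne hy
    exact hz.2.trans (monotone_cdf μ hzy.le)
  exact ge_of_tendsto (((cdf μ).right_continuous _).mono Ioi_subset_Ici_self)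
    (eventually_nhdsWithin_of_forall habove)

-- Only on `(0,1)`: at `p = 1` the defining set may be empty, and then `quant μ 1 = sInf ∅ = 0`.
lemma quant_le_iff_le_cdf (hμ : MemM μ) {p : ℝ} (hp : p ∈ Ioo 0 1) (s : ℝ) :
    quant μ p ≤ s ↔ p ≤ cdf μ s := by
  refine ⟨fun h => (le_cdf_quant hμ hp.2).trans (monotone_cdf μ h), fun h => ?_⟩
  rcases lt_or_ge s 0 with hs | hs
  · have hzero : cdf μ s = 0 := by
      rw [← cdfR_eq_cdf hμ, cdfR, Icc_eq_empty hs.not_ge, measure_empty, ENNReal.toReal_zero]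
    linarith [hp.1]
  · rw [quant, cdfR_eq_cdf hμ]
    exact csInf_le ⟨0, fun _ hx => hx.1⟩ ⟨hs, h⟩

lemma monotoneOn_quant (hμ : MemM μ) : MonotoneOn (quant μ) (Ioo 0 1) := fun _ hp _ hq hpq =>
  (quant_le_iff_le_cdf hμ hp _).2 (hpq.trans ((quant_le_iff_le_cdf hμ hq _).1 le_rfl))

lemma aemeasurable_quant (hμ : MemM μ) : AEMeasurable (quant μ) (volume.restrict (Ioo 0 1)) :=
  aemeasurable_restrict_of_monotoneOn measurableSet_Ioo (monotoneOn_quant hμ)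

theorem map_quant (hμ : MemM μ) : (volume.restrict (Ioo 0 1)).map (quant μ) = μ := by
  have := hμ.1
  refine (Measure.ext_of_Iic μ _ fun s => ?_).symm
  have hpre : quant μ ⁻¹' Iic s ∩ Ioo 0 1 = Ioo 0 1 ∩ Iic (cdf μ s) := by
    ext t
    simp only [mem_inter_iff, mem_preimage, mem_Iic]
    exact ⟨fun ⟨hQ, ht⟩ => ⟨ht, (quant_le_iff_le_cdf hμ ht s).1 hQ⟩,
      fun ⟨ht, hF⟩ => ⟨(quant_le_iff_le_cdf hμ ht s).2 hF, ht⟩⟩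
  rw [Measure.map_apply_of_aemeasurable (aemeasurable_quant hμ) measurableSet_Iic,
    Measure.restrict_apply' measurableSet_Ioo, hpre,
    volume_Ioo_inter_Iic (cdf_le_one μ s), ofReal_cdf]

lemma integrableOn_quant (hμ : MemM μ) : IntegrableOn (quant μ) (Ioo 0 1) := by
  have h := hμ.2.2.1
  rw [← map_quant hμ] at h
  exact (integrable_map_measure aestronglyMeasurable_id (aemeasurable_quant hμ)).1 h

lemma integral_quant (hμ : MemM μ) : ∫ t in Ioo 0 1, quant μ t = mMean μ := by
  have h := integral_map (f := fun x : ℝ => x) (aemeasurable_quant hμ) aestronglyMeasurable_id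
  rw [map_quant hμ] at h
  exact h.symm

end Quantile

section Wasserstein

variable {μ ν : Measure ℝ}

lemma intervalIntegrable_quant (hμ : MemM μ) {p q : ℝ} (hp : p ∈ Icc 0 1) (hq : q ∈ Icc 0 1) :
    IntervalIntegrable (quant μ) volume p q := by
  rw [← uIcc_of_le zero_le_one] at hp hq
  exact ((intervalIntegrable_iff_integrableOn_Ioo_of_le zero_le_one).2
    (integrableOn_quant hμ)).mono_set (uIcc_subset_uIcc hp hq)

lemma intervalIntegral_quant_zero_one (hμ : MemM μ) : ∫ t in 0..1, quant μ t = mMean μ := by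
  rw [intervalIntegral.integral_of_le zero_le_one, integral_Ioc_eq_integral_Ioo, integral_quant hμ]

lemma intervalIntegral_quant_eq_lorenz_mul (hμ : MemM μ) (p : ℝ) :
    ∫ t in 0..p, quant μ t = lorenz μ p * mMean μ :=
  (div_mul_cancel₀ _ hμ.2.2.2.ne').symm

lemma intervalIntegral_quant_nonneg {p : ℝ} (hp : 0 ≤ p) : 0 ≤ ∫ t in 0..p, quant μ t :=
  intervalIntegral.integral_nonneg hp fun _ _ => quant_nonneg _

lemma intervalIntegral_quant_le_mMean (hμ : MemM μ) {p : ℝ} (hp : p ∈ Icc 0 1) :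
    ∫ t in 0..p, quant μ t ≤ mMean μ := by
  rw [← intervalIntegral_quant_zero_one hμ]
  exact intervalIntegral.integral_mono_interval le_rfl hp.1 hp.2
    (ae_of_all _ fun _ => quant_nonneg _)
    (intervalIntegrable_quant hμ (left_mem_Icc.2 zero_le_one) (right_mem_Icc.2 zero_le_one))

lemma W1_eq_integral_Ioo (μ ν : Measure ℝ) :
    W1 μ ν = ∫ t in Ioo 0 1, |quant μ t - quant ν t| := by
  rw [W1, intervalIntegral.integral_of_le zero_le_one, integral_Ioc_eq_integral_Ioo]

lemma abs_intervalIntegral_quant_sub_le_W1 (hμ : MemM μ) (hν : MemM ν) {p : ℝ}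
    (hp : p ∈ Icc 0 1) :
    |(∫ t in 0..p, quant μ t) - ∫ t in 0..p, quant ν t| ≤ W1 μ ν := by
  have h0 : (0 : ℝ) ∈ Icc 0 1 := left_mem_Icc.2 zero_le_one
  have h1 : (1 : ℝ) ∈ Icc 0 1 := right_mem_Icc.2 zero_le_one
  rw [← intervalIntegral.integral_sub (intervalIntegrable_quant hμ h0 hp)
    (intervalIntegrable_quant hν h0 hp)]
  calc _ ≤ ∫ t in 0..p, |quant μ t - quant ν t| :=
        intervalIntegral.abs_integral_le_integral_abs hp.1
    _ ≤ W1 μ ν := intervalIntegral.integral_mono_interval le_rfl hp.1 hp.2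
        (ae_of_all _ fun _ => abs_nonneg _)
        ((intervalIntegrable_quant hμ h0 h1).sub (intervalIntegrable_quant hν h0 h1)).abs

lemma abs_mMean_sub_le_W1 (hμ : MemM μ) (hν : MemM ν) : |mMean μ - mMean ν| ≤ W1 μ ν := by
  simpa only [intervalIntegral_quant_zero_one hμ, intervalIntegral_quant_zero_one hν] using
    abs_intervalIntegral_quant_sub_le_W1 hμ hν (right_mem_Icc.2 zero_le_one)

lemma abs_lorenz_sub_le (hμ : MemM μ) (hν : MemM ν) {p : ℝ} (hp : p ∈ Icc 0 1) :
    |lorenz μ p - lorenz ν p| ≤ W1 μ ν / mMean μ + mMean ν * |(mMean μ)⁻¹ - (mMean ν)⁻¹| := by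
  set A := ∫ t in 0..p, quant μ t
  set B := ∫ t in 0..p, quant ν t
  have hB : 0 ≤ B := intervalIntegral_quant_nonneg hp.1
  have hsplit :
      lorenz μ p - lorenz ν p = (A - B) / mMean μ + B * ((mMean μ)⁻¹ - (mMean ν)⁻¹) := by
    simp only [lorenz, A, B]
    ring
  rw [hsplit]
  refine (abs_add_le _ _).trans (add_le_add ?_ ?_)
  · rw [abs_div, abs_of_pos hμ.2.2.2]
    exact div_le_div_of_nonneg_right (abs_intervalIntegral_quant_sub_le_W1 hμ hν hp) hμ.2.2.2.le
  · rw [abs_mul, abs_of_nonneg hB]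
    exact mul_le_mul_of_nonneg_right (intervalIntegral_quant_le_mMean hν hp) (abs_nonneg _)

variable {ι : Type*} {l : Filter ι} {μs : ι → Measure ℝ}

theorem tendsto_mMean_of_tendsto_W1 (h : ∀ i, MemM (μs i)) (hν : MemM ν)
    (hw : Tendsto (fun i => W1 (μs i) ν) l (𝓝 0)) :
    Tendsto (fun i => mMean (μs i)) l (𝓝 (mMean ν)) :=
  tendsto_iff_dist_tendsto_zero.2 <|
    squeeze_zero (fun _ => dist_nonneg) (fun i => abs_mMean_sub_le_W1 (h i) hν) hw

theorem tendstoUniformlyOn_lorenz_of_tendsto_W1 (h : ∀ i, MemM (μs i)) (hν : MemM ν)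
    (hw : Tendsto (fun i => W1 (μs i) ν) l (𝓝 0)) :
    TendstoUniformlyOn (fun i p => lorenz (μs i) p) (lorenz ν) l (Icc 0 1) := by
  have hm : mMean ν ≠ 0 := hν.2.2.2.ne'
  have hmean := tendsto_mMean_of_tendsto_W1 h hν hw
  refine tendstoUniformlyOn_of_forall_dist_le
    (b := fun i => W1 (μs i) ν / mMean (μs i) + mMean ν * |(mMean (μs i))⁻¹ - (mMean ν)⁻¹|)
    ?_ (Eventually.of_forall fun i p hp => ?_)
  · simpa using (hw.div hmean hm).add
      (((hmean.inv₀ hm).sub_const (mMean ν)⁻¹).abs.const_mul (mMean ν))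
  · rw [dist_comm, Real.dist_eq]
    exact abs_lorenz_sub_le (h i) hν hp

lemma ae_tendsto_quant_of_tendsto_intervalIntegral (h : ∀ i, MemM (μs i)) (hν : MemM ν)
    (hint : ∀ p ∈ Icc (0 : ℝ) 1,
      Tendsto (fun i => ∫ t in 0..p, quant (μs i) t) l (𝓝 (∫ t in 0..p, quant ν t))) :
    ∀ᵐ t ∂volume.restrict (Ioo 0 1), Tendsto (fun i => quant (μs i) t) l (𝓝 (quant ν t)) := by
  have hcont : ∀ᵐ t ∂volume, t ∈ Ioo 0 1 → ContinuousAt (quant ν) t := by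
    filter_upwards [(monotoneOn_quant hν).countable_not_continuousWithinAt.ae_notMem volume]
      with t ht htI
    by_contra hc
    exact ht ⟨htI, fun hw => hc ((continuousWithinAt_iff_continuousAt
      (Ioo_mem_nhds htI.1 htI.2)).1 hw)⟩
  rw [ae_restrict_iff' measurableSet_Ioo]
  filter_upwards [hcont] with t hc ht
  refine tendsto_of_tendsto_intervalIntegral_of_monotoneOn (fun i => monotoneOn_quant (h i))
    (monotoneOn_quant hν) (fun p hp q hq => ?_) ht (hc ht)
  have h0 : (0 : ℝ) ∈ Icc 0 1 := left_mem_Icc.2 zero_le_one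
  replace hp := Ioo_subset_Icc_self hp
  replace hq := Ioo_subset_Icc_self hq
  rw [← intervalIntegral.integral_interval_sub_left (intervalIntegrable_quant hν h0 hq)
    (intervalIntegrable_quant hν h0 hp)]
  exact ((hint q hq).sub (hint p hp)).congr fun i => intervalIntegral.integral_interval_sub_left
    (intervalIntegrable_quant (h i) h0 hq) (intervalIntegrable_quant (h i) h0 hp)

theorem tendsto_W1_of_tendsto_lorenz [l.IsCountablyGenerated] (h : ∀ i, MemM (μs i))
    (hν : MemM ν)
    (hL : ∀ p ∈ Icc (0 : ℝ) 1, Tendsto (fun i => lorenz (μs i) p) l (𝓝 (lorenz ν p)))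
    (hmean : Tendsto (fun i => mMean (μs i)) l (𝓝 (mMean ν))) :
    Tendsto (fun i => W1 (μs i) ν) l (𝓝 0) := by
  have hint : ∀ p ∈ Icc (0 : ℝ) 1,
      Tendsto (fun i => ∫ t in 0..p, quant (μs i) t) l (𝓝 (∫ t in 0..p, quant ν t)) :=
    fun p hp => by
      rw [intervalIntegral_quant_eq_lorenz_mul hν]
      exact ((hL p hp).mul hmean).congr fun i =>
        (intervalIntegral_quant_eq_lorenz_mul (h i) p).symm
  simp only [W1_eq_integral_Ioo]
  refine tendsto_integral_abs_sub_of_tendsto_integral (fun i => integrableOn_quant (h i))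
    (integrableOn_quant hν) (fun i => ae_of_all _ fun _ => quant_nonneg _)
    (ae_tendsto_quant_of_tendsto_intervalIntegral h hν hint) ?_
  rw [integral_quant hν]
  exact hmean.congr fun i => (integral_quant (h i)).symm

end Wasserstein

/-- For `μ_n, μ_∞ ∈ 𝐌`: `W₁(μ_n,μ_∞) → 0` iff (pointwise convergence
of Lorenz functions on `[0,1]` and convergence of means) iff (uniform convergence of
Lorenz functions on `[0,1]` and convergence of means). -/
theorem W1_tendsto_iff_lorenz_conv (μs : ℕ → Measure ℝ) (ν : Measure ℝ)
    (h : ∀ n, MemM (μs n)) (hν : MemM ν) :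
    (Tendsto (fun n => W1 (μs n) ν) atTop (𝓝 0) ↔
      ((∀ p ∈ Set.Icc (0:ℝ) 1, Tendsto (fun n => lorenz (μs n) p) atTop (𝓝 (lorenz ν p))) ∧
        Tendsto (fun n => mMean (μs n)) atTop (𝓝 (mMean ν)))) ∧
    (Tendsto (fun n => W1 (μs n) ν) atTop (𝓝 0) ↔
      (TendstoUniformlyOn (fun n p => lorenz (μs n) p) (lorenz ν) atTop (Set.Icc 0 1) ∧
        Tendsto (fun n => mMean (μs n)) atTop (𝓝 (mMean ν)))) := by
  have hunif := tendstoUniformlyOn_lorenz_of_tendsto_W1 (l := atTop) h hν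
  have hmean := tendsto_mMean_of_tendsto_W1 (l := atTop) h hν
  have hW1 := tendsto_W1_of_tendsto_lorenz (l := atTop) h hν
  exact ⟨⟨fun hw => ⟨fun p hp => (hunif hw).tendsto_at hp, hmean hw⟩, fun hc => hW1 hc.1 hc.2⟩,
    ⟨fun hw => ⟨hunif hw, hmean hw⟩, fun hc => hW1 (fun p hp => hc.1.tendsto_at hp) hc.2⟩⟩
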